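/- Let D be an integral domain and S a torsion-free cancellative additive commutative monoid. If the monoid domain D[S] satisfies ACCP, then D satisfies ACCP and S satisfies ACCP (every ascending chain of principal monoid ideals s + S of S stabilizes). -/

import Mathlib

/-- A commutative ring satisfies ACCP if every ascending chain of principal ideals
stabilizes. -/
def SatisfiesACCP (R : Type*) [CommRing R] : Prop :=
  ∀ I : ℕ → Ideal R, (∀ k, (I k).IsPrincipal) → (∀ k, I k ≤ I (k + 1)) →
    ∃ N, ∀ k, N ≤ k → I k = I N

/-!
`D` and `S` both sit inside `D[S]` compatibly with divisibility: `D` as the constants, split by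
the augmentation `D[S] → D`, and `S` as the monomials `X^s`, where `X^s ∣ X^t` exactly when
`t ∈ s + S`. A non-stabilizing chain of principal ideals in `D` or in `S` would thus give one
in `D[S]`.
-/

theorem SatisfiesACCP.exists_dvd_and_dvd {R : Type*} [CommRing R] (hR : SatisfiesACCP R)
    (a : ℕ → R) (ha : ∀ k, a (k + 1) ∣ a k) :
    ∃ N, ∀ k, N ≤ k → a N ∣ a k ∧ a k ∣ a N := by
  obtain ⟨N, hN⟩ := hR (fun k => Ideal.span {a k}) (fun k => ⟨a k, rfl⟩)
    (fun k => Ideal.span_singleton_le_span_singleton.2 (ha k))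
  refine ⟨N, fun k hk => ⟨?_, ?_⟩⟩
  · exact Ideal.span_singleton_le_span_singleton.1 (hN k hk).le
  · exact Ideal.span_singleton_le_span_singleton.1 (hN k hk).ge

theorem SatisfiesACCP.of_leftInverse {R A : Type*} [CommRing R] [CommRing A]
    (f : R →+* A) (g : A →+* R) (hgf : Function.LeftInverse g f) (hA : SatisfiesACCP A) :
    SatisfiesACCP R := by
  intro I hI hmono
  choose a ha using fun k => (hI k).principal
  simp only [Ideal.submodule_span_eq] at ha
  have hdvd : ∀ k, a (k + 1) ∣ a k := fun k => by
    rw [← Ideal.mem_span_singleton, ← ha]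
    exact hmono k (ha k ▸ Ideal.mem_span_singleton_self (a k))
  obtain ⟨N, hN⟩ := hA.exists_dvd_and_dvd (f ∘ a) fun k => map_dvd f (hdvd k)
  refine ⟨N, fun k hk => le_antisymm ?_ (monotone_nat_of_le_succ hmono hk)⟩
  have : a N ∣ a k := by simpa [hgf _] using map_dvd g (hN k hk).1
  rw [ha k, ha N]
  exact Ideal.span_singleton_le_span_singleton.2 this

def AddMonoidSatisfiesACCP (S : Type*) [AddCommMonoid S] : Prop :=
  ∀ s : ℕ → S, (∀ k, ∃ d, s k = s (k + 1) + d) →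
    ∃ N, ∀ k, N ≤ k → {x : S | ∃ d, x = s k + d} = {x : S | ∃ d, x = s N + d}

namespace AddMonoidAlgebra

variable {R S : Type*} [CommRing R] [AddCommMonoid S]

theorem of'_dvd_of'_iff [Nontrivial R] {s t : S} :
    of' R S s ∣ of' R S t ↔ ∃ d, t = s + d := by
  rw [← Ideal.mem_span_singleton, ← Set.image_singleton, mem_ideal_span_of'_image]
  simp [of'_apply, add_comm]

theorem satisfiesACCP_of_satisfiesACCP (h : SatisfiesACCP R[S]) : SatisfiesACCP R :=
  h.of_leftInverse (algebraMap R R[S]) (lift R R S 1).toRingHom (lift R R S 1).commutes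

theorem addMonoidSatisfiesACCP_of_satisfiesACCP [Nontrivial R] (h : SatisfiesACCP R[S]) :
    AddMonoidSatisfiesACCP S := by
  intro s hs
  obtain ⟨N, hN⟩ := h.exists_dvd_and_dvd (fun k => of' R S (s k)) fun k => of'_dvd_of'_iff.2 (hs k)
  refine ⟨N, fun k hk => ?_⟩
  obtain ⟨⟨e, he⟩, ⟨e', he'⟩⟩ := And.imp of'_dvd_of'_iff.1 of'_dvd_of'_iff.1 (hN k hk)
  refine Set.Subset.antisymm ?_ ?_
  · rintro _ ⟨d, rfl⟩
    exact ⟨e + d, by rw [he, add_assoc]⟩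
  · rintro _ ⟨d, rfl⟩
    exact ⟨e' + d, by rw [he', add_assoc]⟩

end AddMonoidAlgebra

theorem accp_of_monoidAlgebra_accp {D : Type*} [CommRing D] [IsDomain D]
    (S : Type*) [AddCancelCommMonoid S]
    (h : SatisfiesACCP (AddMonoidAlgebra D S)) :
    SatisfiesACCP D ∧
      ∀ s : ℕ → S, (∀ k, ∃ d, s k = s (k + 1) + d) →
        ∃ N, ∀ k, N ≤ k →
          {x : S | ∃ d, x = s k + d} = {x : S | ∃ d, x = s N + d} :=
  ⟨AddMonoidAlgebra.satisfiesACCP_of_satisfiesACCP h,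
    AddMonoidAlgebra.addMonoidSatisfiesACCP_of_satisfiesACCP h⟩
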